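/- (Lemma 3) The value function is symmetric with respect to the line p1 = p2: for all (p1,p2) ∈ [0,1]×[0,1], V(p1,p2) = V(p2,p1). -/

import Mathlib

open Set

noncomputable section

/-- Belief update for an unobserved channel: `T p = λ0 + (λ1 - λ0) p`. -/
def Tr (l0 l1 p : ℝ) : ℝ := l0 + (l1 - l0) * p

/-- The four power allocation actions. -/
inductive PAct
  | Bb  -- balanced
  | B1  -- bet on channel 1
  | B2  -- bet on channel 2
  | Br  -- conservative

/-- Action-value functional `W_a` computed from a function `W`. -/
def Q (l0 l1 β Rl Rh Cl Ch : ℝ) (W : ℝ → ℝ → ℝ) : PAct → ℝ → ℝ → ℝ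
  | PAct.Bb => fun p1 p2 =>
      (p1 + p2) * (Rl + Cl) - 2 * Cl +
        β * ((1 - p1) * (1 - p2) * W l0 l0 + p1 * p2 * W l1 l1 +
             p1 * (1 - p2) * W l1 l0 + (1 - p1) * p2 * W l0 l1)
  | PAct.B1 => fun p1 p2 =>
      (Rh + Ch) * p1 - Ch +
        β * (p1 * W l1 (Tr l0 l1 p2) + (1 - p1) * W l0 (Tr l0 l1 p2))
  | PAct.B2 => fun p1 p2 =>
      (Rh + Ch) * p2 - Ch +
        β * (p2 * W (Tr l0 l1 p1) l1 + (1 - p2) * W (Tr l0 l1 p1) l0)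
  | PAct.Br => fun p1 p2 => β * W (Tr l0 l1 p1) (Tr l0 l1 p2)

/-- The Bellman operator `L W = max over the four actions of W_a`. -/
def Bop (l0 l1 β Rl Rh Cl Ch : ℝ) (W : ℝ → ℝ → ℝ) (p1 p2 : ℝ) : ℝ :=
  max (max (Q l0 l1 β Rl Rh Cl Ch W PAct.Bb p1 p2)
           (Q l0 l1 β Rl Rh Cl Ch W PAct.B1 p1 p2))
      (max (Q l0 l1 β Rl Rh Cl Ch W PAct.B2 p1 p2)
           (Q l0 l1 β Rl Rh Cl Ch W PAct.Br p1 p2))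

/-- Boundedness on the belief space `[0,1] × [0,1]`. -/
def BddOnSq (W : ℝ → ℝ → ℝ) : Prop :=
  ∃ M : ℝ, ∀ p1 ∈ Icc (0:ℝ) 1, ∀ p2 ∈ Icc (0:ℝ) 1, |W p1 p2| ≤ M

/-- Being a fixed point of the Bellman operator on the belief space. -/
def IsFix (l0 l1 β Rl Rh Cl Ch : ℝ) (V : ℝ → ℝ → ℝ) : Prop :=
  ∀ p1 ∈ Icc (0:ℝ) 1, ∀ p2 ∈ Icc (0:ℝ) 1,
    V p1 p2 = Bop l0 l1 β Rl Rh Cl Ch V p1 p2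

/-!
Reflecting a belief function across the diagonal commutes with the Bellman operator, because the
reflection exchanges the actions `B1` and `B2` and fixes `Bb` and `Br`. Hence the reflection of `V`
is again a bounded fixed point. Since every action value is a constant plus `β` times an average of
values of `W`, the operator is a `β`-contraction for the sup distance on the square, so bounded
fixed points are unique and `V` equals its reflection.
-/

lemma nonpos_of_le_imp_le_mul {α : Type*} {s : Set α} {f : α → ℝ} {β : ℝ} (hβ : β < 1)
    (hf : BddAbove (f '' s)) (hc : ∀ D, (∀ x ∈ s, f x ≤ D) → ∀ x ∈ s, f x ≤ β * D) :
    ∀ x ∈ s, f x ≤ 0 := by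
  intro x hx
  set D := sSup (f '' s)
  have hD : ∀ y ∈ s, f y ≤ D := fun y hy => le_csSup hf (mem_image_of_mem f hy)
  have hDβ : D ≤ β * D :=
    csSup_le ⟨f x, mem_image_of_mem f hx⟩ (by rintro _ ⟨y, hy, rfl⟩; exact hc D hD y hy)
  nlinarith [hD x hx]

lemma abs_convex_comb_le {t x y D : ℝ} (ht : t ∈ Icc (0:ℝ) 1) (hx : |x| ≤ D) (hy : |y| ≤ D) :
    |t * x + (1 - t) * y| ≤ D := by
  rw [abs_le] at *
  obtain ⟨ht0, ht1⟩ := ht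
  constructor <;> nlinarith

lemma Tr_mem_Icc {l0 l1 p : ℝ} (hl0 : l0 ∈ Icc (0:ℝ) 1) (hl1 : l1 ∈ Icc (0:ℝ) 1)
    (hp : p ∈ Icc (0:ℝ) 1) : Tr l0 l1 p ∈ Icc (0:ℝ) 1 := by
  obtain ⟨hl00, hl01⟩ := hl0
  obtain ⟨hl10, hl11⟩ := hl1
  obtain ⟨hp0, hp1⟩ := hp
  constructor <;> simp only [Tr] <;> nlinarith

section Bellman

variable {l0 l1 β Rl Rh Cl Ch : ℝ}

lemma Bop_swap (W : ℝ → ℝ → ℝ) (p1 p2 : ℝ) :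
    Bop l0 l1 β Rl Rh Cl Ch (fun x y => W y x) p1 p2 = Bop l0 l1 β Rl Rh Cl Ch W p2 p1 := by
  rw [Bop, Bop, max_max_max_comm]
  congr 2
  simp only [Q]
  ring

lemma IsFix.swap {V : ℝ → ℝ → ℝ} (hV : IsFix l0 l1 β Rl Rh Cl Ch V) :
    IsFix l0 l1 β Rl Rh Cl Ch (fun x y => V y x) := by
  intro p1 hp1 p2 hp2
  rw [Bop_swap]
  exact hV p2 hp2 p1 hp1

lemma BddOnSq.swap {V : ℝ → ℝ → ℝ} (hV : BddOnSq V) : BddOnSq (fun x y => V y x) := by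
  obtain ⟨M, hM⟩ := hV
  exact ⟨M, fun p1 hp1 p2 hp2 => hM p2 hp2 p1 hp1⟩

variable (hβ0 : 0 ≤ β) (hl0 : l0 ∈ Icc (0:ℝ) 1) (hl1 : l1 ∈ Icc (0:ℝ) 1)
  {W W' : ℝ → ℝ → ℝ} {D : ℝ}
  (hD : ∀ p1 ∈ Icc (0:ℝ) 1, ∀ p2 ∈ Icc (0:ℝ) 1, |W p1 p2 - W' p1 p2| ≤ D)
include hβ0 hl0 hl1 hD

lemma abs_Q_sub_Q_le (a : PAct) {p1 p2 : ℝ} (hp1 : p1 ∈ Icc (0:ℝ) 1) (hp2 : p2 ∈ Icc (0:ℝ) 1) :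
    |Q l0 l1 β Rl Rh Cl Ch W a p1 p2 - Q l0 l1 β Rl Rh Cl Ch W' a p1 p2| ≤ β * D := by
  set d := fun x y => W x y - W' x y
  have hT1 := Tr_mem_Icc hl0 hl1 hp1
  have hT2 := Tr_mem_Icc hl0 hl1 hp2
  suffices h : ∃ e, Q l0 l1 β Rl Rh Cl Ch W a p1 p2 - Q l0 l1 β Rl Rh Cl Ch W' a p1 p2 = β * e
      ∧ |e| ≤ D by
    obtain ⟨e, he, hle⟩ := h
    rw [he, abs_mul, abs_of_nonneg hβ0]
    exact mul_le_mul_of_nonneg_left hle hβ0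
  cases a with
  | Bb =>
    refine ⟨p1 * (p2 * d l1 l1 + (1 - p2) * d l1 l0)
      + (1 - p1) * (p2 * d l0 l1 + (1 - p2) * d l0 l0), by simp only [Q, d]; ring, ?_⟩
    exact abs_convex_comb_le hp1 (abs_convex_comb_le hp2 (hD _ hl1 _ hl1) (hD _ hl1 _ hl0))
      (abs_convex_comb_le hp2 (hD _ hl0 _ hl1) (hD _ hl0 _ hl0))
  | B1 =>
    exact ⟨p1 * d l1 (Tr l0 l1 p2) + (1 - p1) * d l0 (Tr l0 l1 p2), by simp only [Q, d]; ring,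
      abs_convex_comb_le hp1 (hD _ hl1 _ hT2) (hD _ hl0 _ hT2)⟩
  | B2 =>
    exact ⟨p2 * d (Tr l0 l1 p1) l1 + (1 - p2) * d (Tr l0 l1 p1) l0, by simp only [Q, d]; ring,
      abs_convex_comb_le hp2 (hD _ hT1 _ hl1) (hD _ hT1 _ hl0)⟩
  | Br =>
    exact ⟨d (Tr l0 l1 p1) (Tr l0 l1 p2), by simp only [Q, d]; ring, hD _ hT1 _ hT2⟩

lemma abs_Bop_sub_Bop_le {p1 p2 : ℝ} (hp1 : p1 ∈ Icc (0:ℝ) 1) (hp2 : p2 ∈ Icc (0:ℝ) 1) :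
    |Bop l0 l1 β Rl Rh Cl Ch W p1 p2 - Bop l0 l1 β Rl Rh Cl Ch W' p1 p2| ≤ β * D := by
  have hQ a := abs_Q_sub_Q_le (Rl := Rl) (Rh := Rh) (Cl := Cl) (Ch := Ch) hβ0 hl0 hl1 hD a hp1 hp2
  refine (abs_max_sub_max_le_max _ _ _ _).trans (max_le ?_ ?_) <;>
    exact (abs_max_sub_max_le_max _ _ _ _).trans (max_le (hQ _) (hQ _))

end Bellman

theorem IsFix.eq_of_bddOnSq {l0 l1 β Rl Rh Cl Ch : ℝ} (hl0 : l0 ∈ Icc (0:ℝ) 1)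
    (hl1 : l1 ∈ Icc (0:ℝ) 1) (hβ0 : 0 ≤ β) (hβ1 : β < 1) {W W' : ℝ → ℝ → ℝ}
    (hW : IsFix l0 l1 β Rl Rh Cl Ch W) (hW' : IsFix l0 l1 β Rl Rh Cl Ch W')
    (hWb : BddOnSq W) (hW'b : BddOnSq W') :
    ∀ p1 ∈ Icc (0:ℝ) 1, ∀ p2 ∈ Icc (0:ℝ) 1, W p1 p2 = W' p1 p2 := by
  obtain ⟨M, hM⟩ := hWb
  obtain ⟨M', hM'⟩ := hW'b
  have hbdd : BddAbove ((fun p : ℝ × ℝ => |W p.1 p.2 - W' p.1 p.2|) '' (Icc 0 1 ×ˢ Icc 0 1)) := by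
    refine ⟨M + M', ?_⟩
    rintro _ ⟨⟨x, y⟩, ⟨hx, hy⟩, rfl⟩
    linarith [abs_sub (W x y) (W' x y), hM x hx y hy, hM' x hx y hy]
  have hzero := nonpos_of_le_imp_le_mul hβ1 hbdd <| by
    rintro D hD ⟨x, y⟩ ⟨hx, hy⟩
    rw [hW x hx y hy, hW' x hx y hy]
    exact abs_Bop_sub_Bop_le hβ0 hl0 hl1 (fun a ha b hb => hD (a, b) ⟨ha, hb⟩) hx hy
  intro p1 hp1 p2 hp2
  exact sub_eq_zero.mp (abs_nonpos_iff.mp (hzero (p1, p2) ⟨hp1, hp2⟩))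

theorem value_symmetric_general
    (l0 l1 β Rl Rh Cl Ch : ℝ)
    (hl0 : l0 ∈ Icc (0:ℝ) 1) (hl1 : l1 ∈ Icc (0:ℝ) 1)
    (hβ0 : 0 ≤ β) (hβ1 : β < 1)
    (V : ℝ → ℝ → ℝ) (hVbdd : BddOnSq V)
    (hVfix : IsFix l0 l1 β Rl Rh Cl Ch V)
    (p1 : ℝ) (hp1 : p1 ∈ Icc (0:ℝ) 1) (p2 : ℝ) (hp2 : p2 ∈ Icc (0:ℝ) 1) :
    V p1 p2 = V p2 p1 :=
  hVfix.eq_of_bddOnSq hl0 hl1 hβ0 hβ1 hVfix.swap hVbdd hVbdd.swap p1 hp1 p2 hp2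

/-- Lemma 3: the value function is symmetric with respect to the line `p1 = p2`. -/
theorem value_symmetric
    (l0 l1 β Rl Rh Cl Ch : ℝ)
    (hl0 : l0 ∈ Icc (0:ℝ) 1) (hl1 : l1 ∈ Icc (0:ℝ) 1) (hl01 : l0 < l1)
    (hβ0 : 0 ≤ β) (hβ1 : β < 1)
    (hRl : 0 < Rl) (hRh : 0 < Rh) (hCl : 0 < Cl) (hCh : 0 < Ch)
    (hRlh : Rl < Rh) (hRh2 : Rh < 2 * Rl)
    (hClh : Cl < Ch) (hCh2 : Ch < 2 * Cl)
    (hRhCh : Ch < Rh) (hRlCl : Cl < Rl)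
    (V : ℝ → ℝ → ℝ) (hVbdd : BddOnSq V)
    (hVfix : IsFix l0 l1 β Rl Rh Cl Ch V)
    (p1 : ℝ) (hp1 : p1 ∈ Icc (0:ℝ) 1) (p2 : ℝ) (hp2 : p2 ∈ Icc (0:ℝ) 1) :
    V p1 p2 = V p2 p1 :=
  value_symmetric_general l0 l1 β Rl Rh Cl Ch hl0 hl1 hβ0 hβ1 V hVbdd hVfix p1 hp1 p2 hp2
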